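/- Let E = E⁺ ⊕ E⁻ be a finite-dimensional ℤ₂-graded complex inner product space and V ∈ End(E) a self-adjoint operator anticommuting with the grading (V E^± ⊆ E^∓). Then for every u > 0, Tr_s[exp(−u V²)] = Tr_s[P_{ker V}], where P_{ker V} is the orthogonal projection onto ker V and Tr_s denotes the supertrace Tr|_{E⁺} − Tr|_{E⁻}. In particular Tr_s[exp(−uV²)] is independent of u and equals dim(ker V ∩ E⁺) − dim(ker V ∩ E⁻). -/

import Mathlib

/-!
Write `Tr_s X = Tr(ε X)` and `P` for the orthogonal projection onto `ker V`. Since `ε` anticommutes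
with `V`, cyclicity of the trace gives `Tr_s(V B) = -Tr_s(V B) = 0` for every `B` commuting with `V`.
Every term `(-u V²)ⁿ` with `n ≥ 1` of the exponential series is of this form, so
`Tr_s exp(-u V²) = Tr_s 1`. On the other side, `V P = P V = 0` and `V² + P` is invertible, so
`W = V (V² + P)⁻¹` commutes with `V` and `V W = 1 - P`, whence `Tr_s P = Tr_s 1` as well.
-/

open NormedSpace Submodule

theorem map_exp_eq_map_one_of_map_pow_succ_eq_zero {𝕂 𝔸 F : Type*} [RCLike 𝕂] [NormedRing 𝔸]
    [NormedAlgebra 𝕂 𝔸] [CompleteSpace 𝔸] [AddCommMonoid F] [Module 𝕂 F] [TopologicalSpace F]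
    [T2Space F] (φ : 𝔸 →L[𝕂] F) {x : 𝔸} (h : ∀ n, φ (x ^ (n + 1)) = 0) :
    φ (exp x) = φ 1 := by
  refine ((exp_series_hasSum_exp' (𝕂 := 𝕂) x).mapL φ).unique
    (hasSum_single 0 fun n hn => ?_) |>.trans ?_
  · obtain ⟨k, rfl⟩ := Nat.exists_eq_succ_of_ne_zero hn
    rw [map_smul, h, smul_zero]
  · simp

theorem exists_commute_mul_eq_one_sub {R : Type*} [Ring R] {v p : R} (hp : IsIdempotentElem p)
    (hvp : v * p = 0) (hpv : p * v = 0) (hunit : IsUnit (v ^ 2 + p)) :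
    ∃ w, Commute v w ∧ v * w = 1 - p := by
  obtain ⟨g, hg⟩ := hunit
  have hvg : Commute v g := by
    simp only [hg, Commute, SemiconjBy, mul_add, add_mul, hvp, hpv, ← pow_succ, ← pow_succ']
  have hpg : p * g = p := by rw [hg, mul_add, sq, ← mul_assoc, hpv, zero_mul, zero_add, hp.eq]
  refine ⟨v * ↑g⁻¹, (Commute.refl v).mul_right hvg.units_inv_right, ?_⟩
  rw [← mul_assoc, ← sq, eq_sub_of_add_eq hg.symm, sub_mul, Units.mul_inv,
    (Units.mul_inv_eq_iff_eq_mul g).mpr hpg.symm]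

section Supertrace

variable {𝕜 E : Type*} [RCLike 𝕜] [NormedAddCommGroup E] [NormedSpace 𝕜 E] [FiniteDimensional 𝕜 E]

noncomputable def supertrace (ε : E →L[𝕜] E) : (E →L[𝕜] E) →L[𝕜] 𝕜 :=
  LinearMap.toContinuousLinearMap
    (LinearMap.trace 𝕜 E ∘ₗ ContinuousLinearMap.coeLM 𝕜 ∘ₗ LinearMap.mulLeft 𝕜 ε)

theorem supertrace_apply (ε X : E →L[𝕜] E) :
    supertrace ε X = LinearMap.trace 𝕜 E ↑(ε * X) := rfl

theorem supertrace_mul_eq_zero {ε V B : E →L[𝕜] E} (hodd : ε * V = -(V * ε))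
    (hB : Commute V B) : supertrace ε (V * B) = 0 := by
  have trace_comm (X Y : E →L[𝕜] E) :
      LinearMap.trace 𝕜 E ↑(X * Y) = LinearMap.trace 𝕜 E ↑(Y * X) := by
    simp only [ContinuousLinearMap.toLinearMap_mul, LinearMap.trace_mul_comm]
  have h : supertrace ε (V * B) = -supertrace ε (V * B) := by
    calc supertrace ε (V * B) = LinearMap.trace 𝕜 E ↑(B * (ε * V)) := by
          rw [supertrace_apply, ← mul_assoc, trace_comm]
      _ = -LinearMap.trace 𝕜 E ↑(ε * (B * V)) := by
          rw [hodd, mul_neg, ← mul_assoc, trace_comm, ContinuousLinearMap.toLinearMap_neg, map_neg]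
      _ = -supertrace ε (V * B) := by rw [hB.eq]; rfl
  exact CharZero.eq_neg_self_iff.mp h

end Supertrace

section KernelProjection

variable {𝕜 E : Type*} [RCLike 𝕜] [NormedAddCommGroup E] [InnerProductSpace 𝕜 E] [CompleteSpace E]

theorem mul_starProjection_ker (V : E →L[𝕜] E) :
    V * (LinearMap.ker (V : E →ₗ[𝕜] E)).starProjection = 0 := by
  ext x
  exact (LinearMap.ker (V : E →ₗ[𝕜] E)).starProjection_apply_mem x

theorem IsSelfAdjoint.starProjection_ker_mul {V : E →L[𝕜] E} (hV : IsSelfAdjoint V) :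
    (LinearMap.ker (V : E →ₗ[𝕜] E)).starProjection * V = 0 := by
  ext x
  refine (starProjection_apply_eq_zero_iff _).mpr ?_
  rw [← hV.isSymmetric.orthogonal_range]
  exact le_orthogonal_orthogonal _ (LinearMap.mem_range_self _ x)

theorem IsSelfAdjoint.isUnit_sq_add_starProjection_ker [FiniteDimensional 𝕜 E] {V : E →L[𝕜] E}
    (hV : IsSelfAdjoint V) :
    IsUnit (V ^ 2 + (LinearMap.ker (V : E →ₗ[𝕜] E)).starProjection) := by
  set P := (LinearMap.ker (V : E →ₗ[𝕜] E)).starProjection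
  have hinj : Function.Injective ⇑(V ^ 2 + P) := by
    refine (injective_iff_map_eq_zero _).mpr fun x hx => ?_
    have hP_mul : P * (V ^ 2 + P) = P := by
      rw [mul_add, sq, ← mul_assoc, hV.starProjection_ker_mul, zero_mul, zero_add,
        (isIdempotentElem_starProjection _).eq]
    have hPx : P x = 0 := by
      rw [← hP_mul]
      exact (congrArg P hx).trans (map_zero P)
    have hVx : V x = 0 := by
      have hV2x : V (V x) = 0 := by simpa [sq, hPx] using hx
      rw [← inner_self_eq_zero (𝕜 := 𝕜)]
      exact (hV.isSymmetric x (V x)).trans (by simp [hV2x])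
    rw [← hPx, starProjection_eq_self_iff.mpr hVx]
  exact ContinuousLinearMap.isUnit_iff_bijective.mpr
    ⟨hinj, LinearMap.injective_iff_surjective.mp hinj⟩

end KernelProjection

theorem mckean_singer_finite_dim_general {E : Type*} [NormedAddCommGroup E] [InnerProductSpace ℂ E]
    [FiniteDimensional ℂ E] [CompleteSpace E]
    (ε V : E →L[ℂ] E)
    (hV : IsSelfAdjoint V) (hodd : ε ∘L V = -(V ∘L ε)) (u : ℝ) :
    LinearMap.trace ℂ E ((ε ∘L NormedSpace.exp (-(u : ℂ) • (V ^ 2)) : E →L[ℂ] E) : E →ₗ[ℂ] E) =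
      LinearMap.trace ℂ E
        ((ε ∘L ((LinearMap.ker (V : E →ₗ[ℂ] E)).subtypeL ∘L
          Submodule.orthogonalProjectionOnto (LinearMap.ker (V : E →ₗ[ℂ] E))) :
          E →L[ℂ] E) : E →ₗ[ℂ] E) := by
  set P := (LinearMap.ker (V : E →ₗ[ℂ] E)).starProjection
  change supertrace ε (exp (-(u : ℂ) • V ^ 2)) = supertrace ε P
  obtain ⟨W, hVW, hW⟩ := exists_commute_mul_eq_one_sub (isIdempotentElem_starProjection _)
    (mul_starProjection_ker V) hV.starProjection_ker_mul hV.isUnit_sq_add_starProjection_ker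
  have hpow (n : ℕ) :
      (-(u : ℂ) • V ^ 2) ^ (n + 1) = V * ((-(u : ℂ)) ^ (n + 1) • V ^ (2 * n + 1)) := by
    rw [smul_pow, mul_smul_comm, ← pow_succ', ← pow_mul]
    rfl
  calc supertrace ε (exp (-(u : ℂ) • V ^ 2)) = supertrace ε 1 :=
        map_exp_eq_map_one_of_map_pow_succ_eq_zero _ fun n => by
          rw [hpow]
          exact supertrace_mul_eq_zero hodd ((Commute.self_pow V _).smul_right _)
    _ = supertrace ε P := by
        rw [← sub_sub_cancel 1 P, ← hW, map_sub, supertrace_mul_eq_zero hodd hVW, sub_zero]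

/-- McKean–Singer identity in finite dimensions: if `ε` is the grading involution of a
ℤ₂-graded finite-dimensional complex inner product space and `V` is an odd self-adjoint
operator, then for all `u > 0` the supertrace `Tr_s[exp(−uV²)] = Tr[ε exp(−uV²)]`
equals the supertrace of the orthogonal projection onto `ker V`. -/
theorem mckean_singer_finite_dim {E : Type*} [NormedAddCommGroup E] [InnerProductSpace ℂ E]
    [FiniteDimensional ℂ E] [CompleteSpace E]
    (ε V : E →L[ℂ] E) (hε : IsSelfAdjoint ε) (hε2 : ε ∘L ε = 1)
    (hV : IsSelfAdjoint V) (hodd : ε ∘L V = -(V ∘L ε)) (u : ℝ) (hu : 0 < u) :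
    LinearMap.trace ℂ E ((ε ∘L NormedSpace.exp (-(u : ℂ) • (V ^ 2)) : E →L[ℂ] E) : E →ₗ[ℂ] E) =
      LinearMap.trace ℂ E
        ((ε ∘L ((LinearMap.ker (V : E →ₗ[ℂ] E)).subtypeL ∘L
          Submodule.orthogonalProjectionOnto (LinearMap.ker (V : E →ₗ[ℂ] E))) :
          E →L[ℂ] E) : E →ₗ[ℂ] E) :=
  mckean_singer_finite_dim_general ε V hV hodd u
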